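/- arXiv:2212.09833 — 4 statements merged into one kernel-verified Lean document; each statement's English description precedes it below -/
import Mathlib

section
/- Let p ≥ 3 be an integer and let Θ̂ ∈ ℝ^{p×p} be a symmetric matrix with zero diagonal. Then the function ω ↦ ‖Θ̂ − ω𝟙_pᵀ − 𝟙_p ωᵀ + 2 Diag(ω)‖_F² over ω ∈ ℝ^p (i.e., the objective of the basis-covariance least-squares problem restricted to diagonal matrices Ω = Diag(ω)) has a unique minimizer ω̂ ∈ ℝ^p, given componentwise by ω̂_j = (1/(p−1)) Σ_{k≠j} Θ̂_{jk} − (1/(2(p−1)(p−2))) Σ_{k≠j} Σ_{l≠j} Θ̂_{lk} for each j ∈ {1,…,p}. -/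
set_option maxHeartbeats 1000000 in
/-- Proposition 1: the least-squares objective of the basis-covariance problem restricted
to diagonal matrices `Ω = Diag(ω)` has a unique minimizer, given in closed form. -/
theorem stmt_0 (p : ℕ) (hp : 3 ≤ p)
    (Θ : Matrix (Fin p) (Fin p) ℝ) (hsym : Θ.IsSymm) (hdiag : ∀ j, Θ j j = 0)
    (f : (Fin p → ℝ) → ℝ)
    (hf : ∀ ω : Fin p → ℝ,
      f ω = ∑ j, ∑ k, (Θ j k - ω j - ω k + 2 * (if j = k then ω j else 0)) ^ 2)
    (ωhat : Fin p → ℝ)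
    (hωhat : ∀ j, ωhat j =
      (1 / ((p : ℝ) - 1)) * ∑ k ∈ Finset.univ.erase j, Θ j k
        - (1 / (2 * ((p : ℝ) - 1) * ((p : ℝ) - 2))) *
            ∑ k ∈ Finset.univ.erase j, ∑ l ∈ Finset.univ.erase j, Θ l k) :
    (∀ ω, f ωhat ≤ f ω) ∧ ∀ ω, (∀ ω', f ω ≤ f ω') → ω = ωhat := by
  have hp' : (3:ℝ) ≤ (p:ℝ) := by exact_mod_cast hp
  have hp1 : ((p:ℝ) - 1) ≠ 0 := by linarith
  have hp2 : ((p:ℝ) - 2) ≠ 0 := by linarith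
  have hsym' : ∀ i j, Θ i j = Θ j i := fun i j => hsym.apply j i
  set R : Fin p → ℝ := fun j => ∑ k, Θ j k with hRdef
  set T : ℝ := ∑ j, ∑ k, Θ j k with hTdef
  have hRsum : ∑ j, R j = T := rfl
  have hRerase : ∀ j : Fin p, ∑ k ∈ Finset.univ.erase j, Θ j k = R j := by
    intro j
    have h : Θ j j + ∑ k ∈ Finset.univ.erase j, Θ j k = ∑ k, Θ j k := by
      simpa using Finset.add_sum_erase Finset.univ (fun k => Θ j k) (Finset.mem_univ j)
    rw [hdiag j, zero_add] at h
    exact h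
  have hcol : ∀ j : Fin p, ∑ l, Θ l j = R j := by
    intro j
    exact Finset.sum_congr rfl fun l _ => hsym' l j
  have hTj : ∀ j : Fin p,
      ∑ k ∈ Finset.univ.erase j, ∑ l ∈ Finset.univ.erase j, Θ l k = T - 2 * R j := by
    intro j
    have h1 : ∀ k : Fin p, ∑ l ∈ Finset.univ.erase j, Θ l k = (∑ l, Θ l k) - Θ j k := by
      intro k
      have h : Θ j k + ∑ l ∈ Finset.univ.erase j, Θ l k = ∑ l, Θ l k := by
        simpa using Finset.add_sum_erase Finset.univ (fun l => Θ l k) (Finset.mem_univ j)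
      linarith
    have h2 : ∑ k ∈ Finset.univ.erase j, ∑ l, Θ l k
        = (∑ k, ∑ l, Θ l k) - ∑ l, Θ l j := by
      have h : (∑ l, Θ l j) + ∑ k ∈ Finset.univ.erase j, ∑ l, Θ l k
          = ∑ k, ∑ l, Θ l k := by
        simpa using Finset.add_sum_erase Finset.univ (fun k => ∑ l, Θ l k) (Finset.mem_univ j)
      linarith
    calc ∑ k ∈ Finset.univ.erase j, ∑ l ∈ Finset.univ.erase j, Θ l k
        = ∑ k ∈ Finset.univ.erase j, ((∑ l, Θ l k) - Θ j k) :=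
          Finset.sum_congr rfl fun k _ => h1 k
      _ = (∑ k ∈ Finset.univ.erase j, ∑ l, Θ l k) - ∑ k ∈ Finset.univ.erase j, Θ j k := by
          rw [Finset.sum_sub_distrib]
      _ = ((∑ k, ∑ l, Θ l k) - ∑ l, Θ l j) - R j := by rw [h2, hRerase j]
      _ = T - 2 * R j := by
          rw [hcol j]
          have : ∑ k, ∑ l, Θ l k = T := by rw [hTdef, Finset.sum_comm]
          rw [this]; ring
  have hω' : ∀ j, ωhat j = (1 / ((p:ℝ) - 1)) * R j
      - (1 / (2 * ((p:ℝ) - 1) * ((p:ℝ) - 2))) * (T - 2 * R j) := by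
    intro j
    rw [hωhat j, hRerase j, hTj j]
  have hS : ∑ j, ωhat j = T / (2 * ((p:ℝ) - 1)) := by
    have hstep : ∑ j, ωhat j = (1 / ((p:ℝ) - 1)) * (∑ j, R j)
        - (1 / (2 * ((p:ℝ) - 1) * ((p:ℝ) - 2))) * ((p:ℝ) * T - 2 * ∑ j, R j) := by
      rw [Finset.sum_congr rfl fun j _ => hω' j, Finset.sum_sub_distrib]
      congr 1
      · rw [Finset.mul_sum]
      · rw [← Finset.mul_sum]
        congr 1
        rw [Finset.sum_sub_distrib, Finset.sum_const, Finset.card_univ, Fintype.card_fin,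
          nsmul_eq_mul, ← Finset.mul_sum]
    rw [hstep, hRsum]
    field_simp
    ring
  have key : ∀ j, ((p:ℝ) - 2) * ωhat j + ∑ k, ωhat k = R j := by
    intro j
    rw [hS, hω' j]
    field_simp
    ring
  -- residual matrix at ωhat
  set A : Fin p → Fin p → ℝ :=
    fun j k => Θ j k - ωhat j - ωhat k + 2 * (if j = k then ωhat j else 0) with hAdef
  have hAdiag : ∀ j, A j j = 0 := by
    intro j
    simp only [hAdef, if_pos rfl, if_true, eq_self_iff_true, hdiag j]
    ring
  have hAsymm : ∀ j k, A j k = A k j := by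
    intro j k
    by_cases h : j = k
    · subst h; rfl
    · simp only [hAdef, if_neg h, if_neg (Ne.symm h), hsym' j k]
      ring
  have rowzero : ∀ j, ∑ k, A j k = 0 := by
    intro j
    have hsum : ∑ k, A j k
        = (∑ k, Θ j k) - (p:ℝ) * ωhat j - (∑ k, ωhat k) + 2 * ωhat j := by
      simp only [hAdef]
      rw [Finset.sum_add_distrib, Finset.sum_sub_distrib, Finset.sum_sub_distrib]
      rw [Finset.sum_const, Finset.card_univ, Fintype.card_fin, nsmul_eq_mul]
      rw [← Finset.mul_sum, Finset.sum_ite_eq Finset.univ j (fun _ => ωhat j)]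
      simp
    rw [hsum]
    have hk := key j
    simp only [hRdef] at hk
    linarith
  have colzero : ∀ k, ∑ j, A j k = 0 := by
    intro k
    rw [Finset.sum_congr rfl fun j _ => hAsymm j k]
    exact rowzero k
  -- main decomposition
  have main : ∀ ω : Fin p → ℝ, f ω = f ωhat
      + ∑ j, ∑ k, ((ω j - ωhat j) + (ω k - ωhat k)
          - 2 * (if j = k then (ω j - ωhat j) else 0)) ^ 2 := by
    intro ω
    set δ : Fin p → ℝ := fun j => ω j - ωhat j with hδdef
    set D : Fin p → Fin p → ℝ :=
      fun j k => δ j + δ k - 2 * (if j = k then δ j else 0) with hDdef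
    have hpoint : ∀ j k, (Θ j k - ω j - ω k + 2 * (if j = k then ω j else 0)) ^ 2
        = A j k ^ 2 - 2 * (A j k * D j k) + D j k ^ 2 := by
      intro j k
      have h : Θ j k - ω j - ω k + 2 * (if j = k then ω j else 0) = A j k - D j k := by
        by_cases h : j = k
        · subst h
          simp only [hAdef, hDdef, hδdef, if_pos rfl, if_true, eq_self_iff_true]
          ring
        · simp only [hAdef, hDdef, hδdef, if_neg h]
          ring
      rw [h]; ring
    have cross : ∑ j, ∑ k, A j k * D j k = 0 := by
      have h1 : ∀ j, ∑ k, A j k * D j k = (∑ k, A j k * δ j) + ∑ k, A j k * δ k := by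
        intro j
        rw [← Finset.sum_add_distrib]
        refine Finset.sum_congr rfl fun k _ => ?_
        by_cases h : j = k
        · subst h; simp [hAdiag j]
        · simp only [hDdef, if_neg h]; ring
      have h2 : ∀ j, ∑ k, A j k * δ j = 0 := by
        intro j; rw [← Finset.sum_mul, rowzero j, zero_mul]
      have h3 : ∑ j, ∑ k, A j k * δ k = 0 := by
        rw [Finset.sum_comm]
        refine Finset.sum_eq_zero fun k _ => ?_
        rw [← Finset.sum_mul, colzero k, zero_mul]
      calc ∑ j, ∑ k, A j k * D j k = ∑ j, ((∑ k, A j k * δ j) + ∑ k, A j k * δ k) :=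
            Finset.sum_congr rfl fun j _ => h1 j
        _ = 0 := by
            rw [Finset.sum_add_distrib, h3, add_zero]
            exact Finset.sum_eq_zero fun j _ => h2 j
    calc f ω = ∑ j, ∑ k, (A j k ^ 2 - 2 * (A j k * D j k) + D j k ^ 2) := by
          rw [hf ω]
          exact Finset.sum_congr rfl fun j _ => Finset.sum_congr rfl fun k _ => hpoint j k
      _ = (∑ j, ∑ k, A j k ^ 2) - 2 * (∑ j, ∑ k, A j k * D j k)
            + ∑ j, ∑ k, D j k ^ 2 := by
          simp only [Finset.sum_add_distrib, Finset.sum_sub_distrib]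
          congr 1
          congr 1
          rw [Finset.mul_sum]
          exact Finset.sum_congr rfl fun j _ => by rw [Finset.mul_sum]
      _ = f ωhat + ∑ j, ∑ k, D j k ^ 2 := by
          rw [cross, hf ωhat]
          simp [hAdef]
  constructor
  · intro ω
    rw [main ω]
    have : (0:ℝ) ≤ ∑ j, ∑ k, ((ω j - ωhat j) + (ω k - ωhat k)
        - 2 * (if j = k then (ω j - ωhat j) else 0)) ^ 2 := by positivity
    linarith
  · intro ω hmin
    have h1 := hmin ωhat
    rw [main ω] at h1
    have h0 : ∑ j, ∑ k, ((ω j - ωhat j) + (ω k - ωhat k)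
        - 2 * (if j = k then (ω j - ωhat j) else 0)) ^ 2 = 0 := by
      have : (0:ℝ) ≤ ∑ j, ∑ k, ((ω j - ωhat j) + (ω k - ωhat k)
          - 2 * (if j = k then (ω j - ωhat j) else 0)) ^ 2 := by positivity
      linarith
    have hterm : ∀ j k : Fin p, j ≠ k → (ω j - ωhat j) + (ω k - ωhat k) = 0 := by
      intro j k hjk
      have hj := (Finset.sum_eq_zero_iff_of_nonneg
        (fun j _ => Finset.sum_nonneg fun k _ => sq_nonneg _)).1 h0 j (Finset.mem_univ j)
      have hk := (Finset.sum_eq_zero_iff_of_nonneg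
        (fun k _ => sq_nonneg _)).1 hj k (Finset.mem_univ k)
      have hz := pow_eq_zero_iff (n := 2) (by norm_num) |>.1 hk
      simp only [if_neg hjk] at hz
      linarith
    funext j
    have hcard : 1 < (Finset.univ.erase j).card := by
      rw [Finset.card_erase_of_mem (Finset.mem_univ j), Finset.card_univ, Fintype.card_fin]
      omega
    obtain ⟨k, hk, l, hl, hkl⟩ := Finset.one_lt_card.1 hcard
    have hkj : k ≠ j := Finset.ne_of_mem_erase hk
    have hlj : l ≠ j := Finset.ne_of_mem_erase hl
    have e1 := hterm j k (Ne.symm hkj)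
    have e2 := hterm j l (Ne.symm hlj)
    have e3 := hterm k l hkl
    have : ω j - ωhat j = 0 := by linarith
    linarith
end

section
/- Let H ≥ 1, y ∈ ℝ^H, and a, b ≥ 0. Define the componentwise soft-thresholding operator soft(y, a)_h = max(|y_h| − a, 0)·sign(y_h). Then the function x ↦ (1/2)‖x − y‖₂² + a‖x‖₁ + b‖x‖₂ on ℝ^H has a unique minimizer, given by x* = (1 − b/‖soft(y,a)‖₂)₊ · soft(y, a) when soft(y,a) ≠ 0, and x* = 0 when soft(y,a) = 0, where (t)₊ = max(t, 0). -/
noncomputable def sglNorm {H : ℕ} (x : Fin H → ℝ) : ℝ := Real.sqrt (∑ h, (x h)^2)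

lemma sglNorm_nonneg {H : ℕ} (x : Fin H → ℝ) : 0 ≤ sglNorm x := Real.sqrt_nonneg _

lemma sglNorm_sq {H : ℕ} (x : Fin H → ℝ) : (sglNorm x)^2 = ∑ h, (x h)^2 :=
  Real.sq_sqrt (Finset.sum_nonneg fun h _ => sq_nonneg _)

lemma sglNorm_CS {H : ℕ} (x z : Fin H → ℝ) : ∑ h, x h * z h ≤ sglNorm x * sglNorm z :=
  Real.sum_mul_le_sqrt_mul_sqrt _ _ _

lemma sglNorm_smul {H : ℕ} (c : ℝ) (hc : 0 ≤ c) (x : Fin H → ℝ) :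
    sglNorm (fun h => c * x h) = c * sglNorm x := by
  unfold sglNorm
  rw [show ∑ h, (c * x h)^2 = c^2 * ∑ h, (x h)^2 by
      rw [Finset.mul_sum]; exact Finset.sum_congr rfl fun h _ => by ring,
    Real.sqrt_mul (sq_nonneg c), Real.sqrt_sq hc]

lemma sglNorm_add_le {H : ℕ} (u v : Fin H → ℝ) :
    sglNorm (fun h => u h + v h) ≤ sglNorm u + sglNorm v := by
  have h1 : (sglNorm (fun h => u h + v h))^2 ≤ (sglNorm u + sglNorm v)^2 := by
    rw [sglNorm_sq]
    have e : ∑ h, (u h + v h)^2 = ∑ h, (u h)^2 + 2 * ∑ h, u h * v h + ∑ h, (v h)^2 := by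
      rw [Finset.mul_sum, ← Finset.sum_add_distrib, ← Finset.sum_add_distrib]
      exact Finset.sum_congr rfl fun h _ => by ring
    rw [e]
    have hCS := sglNorm_CS u v
    have hu := sglNorm_sq u
    have hv := sglNorm_sq v
    nlinarith
  nlinarith [sglNorm_nonneg (fun h => u h + v h), sglNorm_nonneg u, sglNorm_nonneg v]

/-- The proximal operator of the sparse group lasso penalty `a‖·‖₁ + b‖·‖₂`:
the function `x ↦ (1/2)‖x − y‖₂² + a‖x‖₁ + b‖x‖₂` has a unique minimizer, given by
group-wise shrinkage of the soft-thresholded vector. -/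
theorem stmt_7 (H : ℕ) (hH : 1 ≤ H) (y : Fin H → ℝ) (a b : ℝ) (ha : 0 ≤ a) (hb : 0 ≤ b)
    (f : (Fin H → ℝ) → ℝ)
    (hf : ∀ x : Fin H → ℝ,
      f x = (1 / 2) * ∑ h, (x h - y h) ^ 2 + a * ∑ h, |x h|
          + b * Real.sqrt (∑ h, (x h) ^ 2))
    (soft : Fin H → ℝ)
    (hsoft : ∀ h, soft h = max (|y h| - a) 0 * Real.sign (y h)) :
    ∃ xstar : Fin H → ℝ,
      (∀ x, f xstar ≤ f x) ∧
      (∀ x, (∀ z, f x ≤ f z) → x = xstar) ∧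
      (soft ≠ 0 →
        xstar = fun h => max (1 - b / Real.sqrt (∑ i, (soft i) ^ 2)) 0 * soft h) ∧
      (soft = 0 → xstar = 0) := by
  classical
  -- properties of soft thresholding
  have hAB : ∀ h, |soft h - y h| ≤ a ∧ (soft h - y h) * soft h = -(a * |soft h|) := by
    intro h
    rw [hsoft h]
    rcases le_or_gt (|y h|) a with h1 | h1
    · rw [max_eq_right (by linarith), zero_mul]
      constructor
      · rw [zero_sub, abs_neg]; exact h1
      · simp
    · have hy0 : y h ≠ 0 := by
        intro h0; rw [h0] at h1; simp at h1; linarith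
      rw [max_eq_left (by linarith)]
      rcases lt_trichotomy (y h) 0 with hneg | hz | hpos
      · rw [Real.sign_of_neg hneg, abs_of_neg hneg]
        have habs : |y h| = -(y h) := abs_of_neg hneg
        rw [habs] at h1
        constructor
        · have e : (-(y h) - a) * (-1) - y h = a := by ring
          rw [e, abs_of_nonneg ha]
        · have e : (-(y h) - a) * (-1) = y h + a := by ring
          rw [e, abs_of_neg (by linarith : y h + a < 0)]
          ring
      · exact absurd hz hy0
      · rw [Real.sign_of_pos hpos, abs_of_pos hpos]
        rw [abs_of_pos hpos] at h1
        constructor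
        · have e : (y h - a) * 1 - y h = -a := by ring
          rw [e, abs_neg, abs_of_nonneg ha]
        · have e : (y h - a) * 1 = y h - a := by ring
          rw [e, abs_of_pos (by linarith : (0:ℝ) < y h - a)]
          ring
  have hA : ∀ h, |soft h - y h| ≤ a := fun h => (hAB h).1
  have hB : ∀ h, (soft h - y h) * soft h = -(a * |soft h|) := fun h => (hAB h).2
  -- the decomposition of f
  have key : ∀ x : Fin H → ℝ, f x = (1/2)*(sglNorm x)^2 - (∑ h, x h * soft h)
      + (∑ h, ((soft h - y h) * x h + a * |x h|)) + b * sglNorm x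
      + ((1/2)*(sglNorm soft)^2
          + ∑ h, ((1/2)*(soft h - y h)^2 - (soft h - y h) * soft h)) := by
    intro x
    rw [hf x]
    have hsx : Real.sqrt (∑ h, (x h)^2) = sglNorm x := rfl
    rw [hsx, sglNorm_sq x, sglNorm_sq soft]
    simp only [Finset.mul_sum, ← Finset.sum_add_distrib, ← Finset.sum_sub_distrib]
    have e : ∑ h, (1/2 * (x h - y h)^2 + a * |x h|)
        = ∑ h, (1/2 * (x h)^2 - x h * soft h + ((soft h - y h) * x h + a * |x h|)
            + (1/2 * (soft h)^2 + (1/2 * (soft h - y h)^2 - (soft h - y h) * soft h))) :=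
      Finset.sum_congr rfl fun h _ => by ring
    simp only [Finset.sum_add_distrib] at e ⊢
    linarith [e]
  -- the penalty-sum is nonnegative, and vanishes at nonneg multiples of soft
  have hRnn : ∀ x : Fin H → ℝ, 0 ≤ ∑ h, ((soft h - y h) * x h + a * |x h|) := by
    intro x
    apply Finset.sum_nonneg
    intro h _
    have h1 : |(soft h - y h) * x h| ≤ a * |x h| := by
      rw [abs_mul]; exact mul_le_mul_of_nonneg_right (hA h) (abs_nonneg _)
    have h2 := neg_abs_le ((soft h - y h) * x h)
    linarith
  -- set up xstar
  set ns : ℝ := sglNorm soft with hnsdef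
  set c : ℝ := max (1 - b / ns) 0 with hcdef
  set xstar : Fin H → ℝ := fun h => c * soft h with hxstardef
  set m : ℝ := max (ns - b) 0 with hmdef
  have hc : 0 ≤ c := le_max_right _ _
  have hns : 0 ≤ ns := sglNorm_nonneg _
  have hcns : c * ns = m := by
    rcases eq_or_ne soft 0 with h0 | h0
    · have : ns = 0 := by rw [hnsdef, h0]; unfold sglNorm; simp
      rw [this, mul_zero, hmdef]
      rw [max_eq_right (by linarith)]
    · have hp : 0 < ns := by
        obtain ⟨i, hi⟩ := Function.ne_iff.mp h0
        rw [hnsdef]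
        exact Real.sqrt_pos.mpr (Finset.sum_pos' (fun j _ => sq_nonneg _)
          ⟨i, Finset.mem_univ i, pow_two_pos_of_ne_zero hi⟩)
      rw [hcdef, max_mul_of_nonneg _ _ hp.le, zero_mul, hmdef]
      congr 1
      field_simp
  have hm : 0 ≤ m := le_max_right _ _
  have hNxstar : sglNorm xstar = m := by
    rw [hxstardef, sglNorm_smul c hc, ← hnsdef, hcns]
  have hPstar : ∑ h, xstar h * soft h = m * ns := by
    have e : ∑ h, xstar h * soft h = c * ∑ h, (soft h)^2 := by
      rw [Finset.mul_sum]
      exact Finset.sum_congr rfl fun h _ => by rw [hxstardef]; ring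
    rw [e, ← sglNorm_sq soft, ← hnsdef, ← hcns]; ring
  have hRstar : ∑ h, ((soft h - y h) * xstar h + a * |xstar h|) = 0 := by
    apply Finset.sum_eq_zero
    intro h _
    have e1 : xstar h = c * soft h := rfl
    rw [e1, abs_mul, abs_of_nonneg hc]
    have e2 : (soft h - y h) * (c * soft h) = c * ((soft h - y h) * soft h) := by ring
    rw [e2, hB h]
    ring
  -- minimality
  have hmin : ∀ x, f xstar ≤ f x := by
    intro x
    rw [key x, key xstar, hNxstar, hPstar, hRstar]
    have hCS := sglNorm_CS x soft
    have hR := hRnn x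
    have hNx := sglNorm_nonneg x
    rw [← hnsdef] at hCS
    rcases le_or_gt 0 (ns - b) with hd | hd
    · have hm' : m = ns - b := max_eq_left hd
      nlinarith [sq_nonneg (sglNorm x - (ns - b))]
    · have hm' : m = 0 := max_eq_right hd.le
      nlinarith [sq_nonneg (sglNorm x)]
  -- uniqueness
  have huniq : ∀ x, (∀ z, f x ≤ f z) → x = xstar := by
    intro x hx
    have hfx : f x = f xstar := le_antisymm (hx xstar) (hmin x)
    set mid : Fin H → ℝ := fun h => (x h + xstar h) / 2 with hmiddef
    have hmid_le : f x ≤ f mid := hx mid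
    -- quadratic part
    have e1 : ∑ h, (mid h - y h)^2
        = (1/2) * ∑ h, (x h - y h)^2 + (1/2) * ∑ h, (xstar h - y h)^2
          - (1/4) * ∑ h, (x h - xstar h)^2 := by
      simp only [Finset.mul_sum, ← Finset.sum_add_distrib, ← Finset.sum_sub_distrib]
      exact Finset.sum_congr rfl fun h _ => by rw [hmiddef]; ring
    -- l1 part
    have e2 : ∑ h, |mid h| ≤ (1/2) * ∑ h, |x h| + (1/2) * ∑ h, |xstar h| := by
      simp only [Finset.mul_sum, ← Finset.sum_add_distrib]
      apply Finset.sum_le_sum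
      intro h _
      have := abs_add_le (x h) (xstar h)
      have e : |mid h| = |x h + xstar h| / 2 := by
        rw [hmiddef]
        rw [abs_div]
        norm_num
      rw [e]
      linarith
    -- l2 part
    have e3 : sglNorm mid ≤ (1/2) * sglNorm x + (1/2) * sglNorm xstar := by
      have emid : mid = fun h => (1/2 : ℝ) * (x h + xstar h) := by
        funext h; rw [hmiddef]; ring
      have htri := sglNorm_add_le x xstar
      calc sglNorm mid = (1/2) * sglNorm (fun h => x h + xstar h) := by
            rw [emid, sglNorm_smul (1/2) (by norm_num)]
        _ ≤ (1/2) * (sglNorm x + sglNorm xstar) := by linarith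
        _ = (1/2) * sglNorm x + (1/2) * sglNorm xstar := by ring
    have e2' := mul_le_mul_of_nonneg_left e2 ha
    have e3' := mul_le_mul_of_nonneg_left e3 hb
    have hfm : f mid ≤ (1/2) * f x + (1/2) * f xstar
        - (1/8) * ∑ h, (x h - xstar h)^2 := by
      rw [hf mid, hf x, hf xstar]
      have hsm : Real.sqrt (∑ h, (mid h)^2) = sglNorm mid := rfl
      have hsx : Real.sqrt (∑ h, (x h)^2) = sglNorm x := rfl
      have hss : Real.sqrt (∑ h, (xstar h)^2) = sglNorm xstar := rfl
      rw [hsm, hsx, hss]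
      linarith [e1]
    have hSnn : 0 ≤ ∑ h, (x h - xstar h)^2 :=
      Finset.sum_nonneg fun h _ => sq_nonneg _
    have hS0 : ∑ h, (x h - xstar h)^2 = 0 := by
      rw [hfx] at hmid_le hfm
      linarith
    funext h
    have := (Finset.sum_eq_zero_iff_of_nonneg (fun i _ => sq_nonneg (x i - xstar i))).mp
      hS0 h (Finset.mem_univ h)
    have := sq_eq_zero_iff.mp this
    linarith [this]
  refine ⟨xstar, hmin, huniq, ?_, ?_⟩
  · intro _
    rw [hxstardef, hcdef, hnsdef]
    rfl
  · intro h0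
    funext h
    rw [hxstardef]
    show c * soft h = 0
    rw [h0]
    simp
end

section
/- Let H ≥ 1, p ≥ 1, Γ ∈ ℝ^{H×p×p}, and α, λ, γ ≥ 0. Consider minimizing over Ω ∈ ℝ^{H×p×p} the function (1/2)Σ_{h,j,k}(Ω_{hjk} − Γ_{hjk})² + αλ Σ_{h=1}^H Σ_{j≠k} |Ω_{hjk}| + αγ Σ_{j≠k} ‖Ω_{·jk}‖₂, where Ω_{·jk} = (Ω_{1jk},…,Ω_{Hjk})ᵀ ∈ ℝ^H. This problem has a unique minimizer Ω*, whose fibers satisfy: Ω*_{·jj} = Γ_{·jj} for every j, and for j ≠ k, Ω*_{·jk} = (1 − αγ/‖soft(Γ_{·jk}, αλ)‖₂)₊ · soft(Γ_{·jk}, αλ) when soft(Γ_{·jk}, αλ) ≠ 0, and Ω*_{·jk} = 0 otherwise, where soft(y, τ)_h = max(|y_h| − τ, 0)·sign(y_h) componentwise and (t)₊ = max(t, 0). -/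
/-!
The objective separates over the fibers `Ω_{·jk}`; on each fiber it is
`½‖x - y‖² + τ‖x‖₁ + κ‖x‖₂`, with `τ = κ = 0` on the diagonal. If `y - z` is a
subgradient of the penalty at `z`, then `f z + ½‖x - z‖² ≤ f x` for every `x`, which gives both
minimality and uniqueness. For `z = (1 - κ/‖s‖)₊ s` with `s = soft(y, τ)`, the certificate
is the splitting `y - z = (y - s) + (s - z)`. The first part has entries bounded by `τ` and
aligned in sign with `s`, so it is a subgradient of `τ‖·‖₁` at `z`. The second has norm at
most `κ` and is aligned with `z`, so it is a subgradient of `κ‖·‖₂` at `z`.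
-/

open Finset

noncomputable section

def softThreshold (τ t : ℝ) : ℝ := max (|t| - τ) 0 * Real.sign t

theorem softThreshold_zero (t : ℝ) : softThreshold 0 t = t := by
  rcases lt_trichotomy t 0 with ht | rfl | ht
  · simp [softThreshold, Real.sign_of_neg ht, abs_of_neg ht, ht.le]
  · simp [softThreshold]
  · simp [softThreshold, Real.sign_of_pos ht, abs_of_pos ht, ht.le]

theorem abs_sub_softThreshold_le {τ : ℝ} (hτ : 0 ≤ τ) (t : ℝ) :
    |t - softThreshold τ t| ≤ τ := by
  rcases lt_trichotomy t 0 with ht | rfl | ht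
  · simp only [softThreshold, Real.sign_of_neg ht, abs_of_neg ht]
    rcases le_total (-t - τ) 0 with h | h
    · rw [max_eq_right h, abs_le]; constructor <;> linarith
    · rw [max_eq_left h, abs_le]; constructor <;> linarith
  · simpa [softThreshold] using hτ
  · simp only [softThreshold, Real.sign_of_pos ht, abs_of_pos ht]
    rcases le_total (t - τ) 0 with h | h
    · rw [max_eq_right h, abs_le]; constructor <;> linarith
    · rw [max_eq_left h, abs_le]; constructor <;> linarith

theorem sub_softThreshold_mul_self (τ t : ℝ) :
    (t - softThreshold τ t) * softThreshold τ t = τ * |softThreshold τ t| := by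
  rcases lt_trichotomy t 0 with ht | rfl | ht
  · simp only [softThreshold, Real.sign_of_neg ht, abs_of_neg ht]
    rcases le_total (-t - τ) 0 with h | h
    · simp [max_eq_right h]
    · rw [max_eq_left h, abs_of_nonpos (by linarith)]; ring
  · simp [softThreshold]
  · simp only [softThreshold, Real.sign_of_pos ht, abs_of_pos ht]
    rcases le_total (t - τ) 0 with h | h
    · simp [max_eq_right h]
    · rw [max_eq_left h, abs_of_nonneg (by linarith)]; ring

/-- At `n = 0` the junk value `κ / 0 = 0` makes the factor `1`. This is harmless, since it is
applied with `n = ‖s‖`, which vanishes only when `s = 0`. -/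
def shrinkFactor (κ n : ℝ) : ℝ := max (1 - κ / n) 0

theorem shrinkFactor_nonneg (κ n : ℝ) : 0 ≤ shrinkFactor κ n := le_max_right _ _

theorem shrinkFactor_le_one {κ n : ℝ} (hκ : 0 ≤ κ) (hn : 0 ≤ n) :
    shrinkFactor κ n ≤ 1 :=
  max_le (by linarith [div_nonneg hκ hn]) zero_le_one

theorem one_sub_shrinkFactor_mul_le {κ n : ℝ} (hκ : 0 ≤ κ) (hn : 0 ≤ n) :
    (1 - shrinkFactor κ n) * n ≤ κ := by
  rcases hn.eq_or_lt with rfl | hn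
  · simpa using hκ
  rcases le_total (1 - κ / n) 0 with h | h
  · rw [shrinkFactor, max_eq_right h, sub_zero, one_mul]
    rwa [sub_nonpos, one_le_div hn] at h
  · rw [shrinkFactor, max_eq_left h, sub_sub_cancel, div_mul_cancel₀ κ hn.ne']

theorem shrinkFactor_mul_one_sub_shrinkFactor_mul_sq (κ n : ℝ) :
    shrinkFactor κ n * (1 - shrinkFactor κ n) * n ^ 2 = shrinkFactor κ n * κ * n := by
  rcases le_total (1 - κ / n) 0 with h | h
  · simp [shrinkFactor, max_eq_right h]
  · rcases eq_or_ne n 0 with rfl | hn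
    · simp
    · rw [shrinkFactor, max_eq_left h, sub_sub_cancel]; field_simp

section Fiber

variable {ι : Type*} [Fintype ι]

def groupShrink (κ : ℝ) (s : ι → ℝ) : ι → ℝ :=
  fun i => shrinkFactor κ √(∑ j, s j ^ 2) * s i

theorem sqrt_sum_mul_sq (a : ℝ) (s : ι → ℝ) :
    √(∑ i, (a * s i) ^ 2) = |a| * √(∑ i, s i ^ 2) := by
  simp_rw [mul_pow, ← mul_sum]
  rw [Real.sqrt_mul (sq_nonneg a), Real.sqrt_sq_eq_abs]

theorem sqrt_sum_sq_sub_groupShrink_le {κ : ℝ} (hκ : 0 ≤ κ) (s : ι → ℝ) :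
    √(∑ i, (s i - groupShrink κ s i) ^ 2) ≤ κ := by
  set n := √(∑ j, s j ^ 2)
  have hn : 0 ≤ n := Real.sqrt_nonneg _
  have hsub (i : ι) : s i - groupShrink κ s i = (1 - shrinkFactor κ n) * s i := by
    rw [groupShrink]; ring
  simp_rw [hsub]
  rw [sqrt_sum_mul_sq, abs_of_nonneg (sub_nonneg.2 (shrinkFactor_le_one hκ hn))]
  exact one_sub_shrinkFactor_mul_le hκ hn

theorem sum_sub_groupShrink_mul (κ : ℝ) (s : ι → ℝ) :
    ∑ i, (s i - groupShrink κ s i) * groupShrink κ s i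
      = κ * √(∑ i, groupShrink κ s i ^ 2) := by
  set n := √(∑ j, s j ^ 2)
  set c := shrinkFactor κ n
  have hsq : ∑ j, s j ^ 2 = n ^ 2 := (Real.sq_sqrt (sum_nonneg fun j _ => sq_nonneg _)).symm
  have hsub (i : ι) : (s i - groupShrink κ s i) * groupShrink κ s i = c * (1 - c) * s i ^ 2 := by
    rw [groupShrink]; ring
  have hnorm : √(∑ i, groupShrink κ s i ^ 2) = c * n := by
    rw [show groupShrink κ s = fun i => c * s i from rfl, sqrt_sum_mul_sq,
      abs_of_nonneg (shrinkFactor_nonneg κ n)]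
  rw [hnorm, sum_congr rfl fun i _ => hsub i, ← mul_sum, hsq]
  linear_combination shrinkFactor_mul_one_sub_shrinkFactor_mul_sq κ n

def fiberObjective (τ κ : ℝ) (y x : ι → ℝ) : ℝ :=
  (1 / 2) * ∑ i, (x i - y i) ^ 2 + τ * ∑ i, |x i| + κ * √(∑ i, x i ^ 2)

def sparseGroupProx (τ κ : ℝ) (y : ι → ℝ) : ι → ℝ :=
  groupShrink κ fun i => softThreshold τ (y i)

theorem half_sum_sq_add_le_of_subgradient (f : (ι → ℝ) → ℝ) (y z : ι → ℝ)
    (hz : ∀ x, f z + ∑ i, (y i - z i) * (x i - z i) ≤ f x) (x : ι → ℝ) :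
    (1 / 2) * ∑ i, (z i - y i) ^ 2 + f z + (1 / 2) * ∑ i, (x i - z i) ^ 2
      ≤ (1 / 2) * ∑ i, (x i - y i) ^ 2 + f x := by
  have hsq : ∑ i, (x i - y i) ^ 2
      = ∑ i, (z i - y i) ^ 2 + ∑ i, (x i - z i) ^ 2 - 2 * ∑ i, (y i - z i) * (x i - z i) := by
    rw [mul_sum, ← sum_add_distrib, ← sum_sub_distrib]
    exact sum_congr rfl fun i _ => by ring
  linarith [hz x]

theorem sum_abs_subgradient {τ : ℝ} {g z : ι → ℝ} (hg : ∀ i, |g i| ≤ τ)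
    (hgz : ∑ i, g i * z i = τ * ∑ i, |z i|) (x : ι → ℝ) :
    τ * ∑ i, |z i| + ∑ i, g i * (x i - z i) ≤ τ * ∑ i, |x i| := by
  have hgx : ∑ i, g i * x i ≤ τ * ∑ i, |x i| := by
    rw [mul_sum]
    refine sum_le_sum fun i _ => ?_
    calc g i * x i ≤ |g i| * |x i| := by rw [← abs_mul]; exact le_abs_self _
      _ ≤ τ * |x i| := mul_le_mul_of_nonneg_right (hg i) (abs_nonneg _)
  simp only [mul_sub, sum_sub_distrib]
  linarith

theorem sqrt_sum_sq_subgradient {κ : ℝ} {g z : ι → ℝ} (hg : √(∑ i, g i ^ 2) ≤ κ)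
    (hgz : ∑ i, g i * z i = κ * √(∑ i, z i ^ 2)) (x : ι → ℝ) :
    κ * √(∑ i, z i ^ 2) + ∑ i, g i * (x i - z i) ≤ κ * √(∑ i, x i ^ 2) := by
  have hgx : ∑ i, g i * x i ≤ κ * √(∑ i, x i ^ 2) :=
    (Real.sum_mul_le_sqrt_mul_sqrt _ g x).trans
      (mul_le_mul_of_nonneg_right hg (Real.sqrt_nonneg _))
  simp only [mul_sub, sum_sub_distrib]
  linarith

theorem fiberObjective_sparseGroupProx_add_le {τ κ : ℝ} (hτ : 0 ≤ τ) (hκ : 0 ≤ κ)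
    (y x : ι → ℝ) :
    fiberObjective τ κ y (sparseGroupProx τ κ y)
        + (1 / 2) * ∑ i, (x i - sparseGroupProx τ κ y i) ^ 2
      ≤ fiberObjective τ κ y x := by
  set s : ι → ℝ := fun i => softThreshold τ (y i)
  set z := sparseGroupProx τ κ y
  set c := shrinkFactor κ √(∑ j, s j ^ 2)
  have hz : z = fun i => c * s i := rfl
  have hl1 : ∑ i, (y i - s i) * z i = τ * ∑ i, |z i| := by
    have hc : |c| = c := abs_of_nonneg (shrinkFactor_nonneg _ _)
    simp only [hz, mul_sum, abs_mul, hc]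
    exact sum_congr rfl fun i _ => by
      linear_combination c * sub_softThreshold_mul_self τ (y i)
  set pen : (ι → ℝ) → ℝ := fun x => τ * ∑ i, |x i| + κ * √(∑ i, x i ^ 2)
  have hsubgrad (x : ι → ℝ) : pen z + ∑ i, (y i - z i) * (x i - z i) ≤ pen x := by
    have h1 := sum_abs_subgradient (fun i => abs_sub_softThreshold_le hτ (y i)) hl1 x
    have h2 := sqrt_sum_sq_subgradient (sqrt_sum_sq_sub_groupShrink_le hκ s)
      (sum_sub_groupShrink_mul κ s) x
    change κ * √(∑ i, z i ^ 2) + ∑ i, (s i - z i) * (x i - z i) ≤ _ at h2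
    have hsplit : ∑ i, (y i - z i) * (x i - z i)
        = ∑ i, (y i - s i) * (x i - z i) + ∑ i, (s i - z i) * (x i - z i) := by
      rw [← sum_add_distrib]; exact sum_congr rfl fun i _ => by ring
    linarith
  have := half_sum_sq_add_le_of_subgradient pen y z hsubgrad x
  simp only [fiberObjective, pen] at this ⊢
  linarith

theorem sparseGroupProx_zero (y : ι → ℝ) : sparseGroupProx 0 0 y = y := by
  ext i
  simp [sparseGroupProx, groupShrink, shrinkFactor, softThreshold_zero]

end Fiber

section Tensor

variable {ι ν : Type*} [Fintype ι] [Fintype ν]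

theorem eq_of_sum_sum_sum_sq_sub_nonpos {Ω Ω' : ι → ν → ν → ℝ}
    (hle : ∑ j, ∑ k, ∑ h, (Ω h j k - Ω' h j k) ^ 2 ≤ 0) : Ω = Ω' := by
  have h0 := le_antisymm hle (by positivity)
  funext h j k
  have hj := (sum_eq_zero_iff_of_nonneg fun j _ => by positivity).1 h0 j (mem_univ j)
  have hk := (sum_eq_zero_iff_of_nonneg fun k _ => by positivity).1 hj k (mem_univ k)
  have hh := (sum_eq_zero_iff_of_nonneg fun h _ => by positivity).1 hk h (mem_univ h)
  exact sub_eq_zero.1 (pow_eq_zero_iff two_ne_zero |>.1 hh)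

theorem isMinimizer_unique_of_add_sum_sq_le {F : (ι → ν → ν → ℝ) → ℝ}
    {Ω₀ : ι → ν → ν → ℝ} (hgrowth : ∀ Ω,
      F Ω₀ + (1 / 2) * ∑ j, ∑ k, ∑ h, (Ω h j k - Ω₀ h j k) ^ 2 ≤ F Ω) :
    (∀ Ω, F Ω₀ ≤ F Ω) ∧ ∀ Ω, (∀ Ω', F Ω ≤ F Ω') → Ω = Ω₀ := by
  refine ⟨fun Ω => ?_, fun Ω hΩ => eq_of_sum_sum_sum_sq_sub_nonpos ?_⟩
  · have : 0 ≤ ∑ j, ∑ k, ∑ h, (Ω h j k - Ω₀ h j k) ^ 2 := by positivity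
    linarith [hgrowth Ω]
  · linarith [hgrowth Ω, hΩ Ω₀]

variable [DecidableEq ν]

theorem sum_erase_eq_sum_ite (f : ν → ℝ) (j : ν) :
    ∑ k ∈ univ.erase j, f k = ∑ k, if j = k then 0 else f k := by
  rw [← filter_ne', sum_filter]
  exact sum_congr rfl fun k _ => by split_ifs <;> simp_all [eq_comm]

theorem objective_eq_sum_fiberObjective (Γ Ω : ι → ν → ν → ℝ) (a b : ℝ) :
    (1 / 2) * (∑ h, ∑ j, ∑ k, (Ω h j k - Γ h j k) ^ 2)
        + a * ∑ h, ∑ j, ∑ k ∈ univ.erase j, |Ω h j k|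
        + b * ∑ j, ∑ k ∈ univ.erase j, √(∑ h, Ω h j k ^ 2)
      = ∑ j, ∑ k, fiberObjective (if j = k then 0 else a) (if j = k then 0 else b)
          (fun h => Γ h j k) (fun h => Ω h j k) := by
  simp only [fiberObjective, sum_erase_eq_sum_ite, mul_sum, sum_add_distrib, mul_ite, ite_mul,
    mul_zero, zero_mul]
  congr 2 <;> rw [sum_comm] <;> exact sum_congr rfl fun _ _ => sum_comm

def sparseGroupProxTensor (a b : ℝ) (Γ : ι → ν → ν → ℝ) : ι → ν → ν → ℝ :=
  fun h j k =>
    sparseGroupProx (if j = k then 0 else a) (if j = k then 0 else b) (fun i => Γ i j k) h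

theorem sum_fiberObjective_sparseGroupProxTensor_add_le {a b : ℝ} (ha : 0 ≤ a) (hb : 0 ≤ b)
    (Γ Ω : ι → ν → ν → ℝ) :
    ∑ j, ∑ k, fiberObjective (if j = k then 0 else a) (if j = k then 0 else b)
          (fun h => Γ h j k) (fun h => sparseGroupProxTensor a b Γ h j k)
        + (1 / 2) * ∑ j, ∑ k, ∑ h, (Ω h j k - sparseGroupProxTensor a b Γ h j k) ^ 2
      ≤ ∑ j, ∑ k, fiberObjective (if j = k then 0 else a) (if j = k then 0 else b)
          (fun h => Γ h j k) (fun h => Ω h j k) := by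
  rw [mul_sum, ← sum_add_distrib]
  refine sum_le_sum fun j _ => ?_
  rw [mul_sum, ← sum_add_distrib]
  refine sum_le_sum fun k _ => ?_
  exact fiberObjective_sparseGroupProx_add_le (ite_nonneg le_rfl ha) (ite_nonneg le_rfl hb) _ _

end Tensor

end

theorem stmt_8_general (H p : ℕ)
    (Γ : Fin H → Fin p → Fin p → ℝ) (α lam γ : ℝ)
    (hα : 0 ≤ α) (hlam : 0 ≤ lam) (hγ : 0 ≤ γ)
    (F : (Fin H → Fin p → Fin p → ℝ) → ℝ)
    (hF : ∀ Ω : Fin H → Fin p → Fin p → ℝ,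
      F Ω = (1 / 2) * (∑ h, ∑ j, ∑ k, (Ω h j k - Γ h j k) ^ 2)
          + α * lam * ∑ h, ∑ j, ∑ k ∈ Finset.univ.erase j, |Ω h j k|
          + α * γ * ∑ j, ∑ k ∈ Finset.univ.erase j, Real.sqrt (∑ h, (Ω h j k) ^ 2))
    (soft : Fin p → Fin p → Fin H → ℝ)
    (hsoft : ∀ j k h, soft j k h = max (|Γ h j k| - α * lam) 0 * Real.sign (Γ h j k)) :
    ∃ Ωstar : Fin H → Fin p → Fin p → ℝ,
      (∀ Ω, F Ωstar ≤ F Ω) ∧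
      (∀ Ω, (∀ Ω', F Ω ≤ F Ω') → Ω = Ωstar) ∧
      (∀ h j, Ωstar h j j = Γ h j j) ∧
      (∀ j k, j ≠ k → soft j k ≠ 0 → ∀ h,
        Ωstar h j k
          = max (1 - α * γ / Real.sqrt (∑ i, (soft j k i) ^ 2)) 0 * soft j k h) ∧
      (∀ j k, j ≠ k → soft j k = 0 → ∀ h, Ωstar h j k = 0) := by
  have hsoft' (j k : Fin p) : soft j k = fun h => softThreshold (α * lam) (Γ h j k) :=
    funext (hsoft j k)
  set Ωstar := sparseGroupProxTensor (α * lam) (α * γ) Γ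
  have hgrowth (Ω : Fin H → Fin p → Fin p → ℝ) :
      F Ωstar + (1 / 2) * ∑ j, ∑ k, ∑ h, (Ω h j k - Ωstar h j k) ^ 2 ≤ F Ω := by
    rw [hF, hF, objective_eq_sum_fiberObjective, objective_eq_sum_fiberObjective]
    exact sum_fiberObjective_sparseGroupProxTensor_add_le (mul_nonneg hα hlam)
      (mul_nonneg hα hγ) Γ Ω
  obtain ⟨hmin, hunique⟩ := isMinimizer_unique_of_add_sum_sq_le hgrowth
  refine ⟨Ωstar, hmin, hunique, fun h j => ?_, fun j k hjk _ h => ?_,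
    fun j k hjk hzero h => ?_⟩
  · simp [Ωstar, sparseGroupProxTensor, sparseGroupProx_zero]
  · simp only [Ωstar, sparseGroupProxTensor, if_neg hjk, hsoft']
    rfl
  · simp only [Ωstar, sparseGroupProxTensor, if_neg hjk, sparseGroupProx, ← hsoft', hzero]
    simp [groupShrink]

/-- The proximal step of the combined lasso and group-lasso penalty: the problem
`min_Ω (1/2)Σ(Ω−Γ)² + αλ Σ_h Σ_{j≠k}|Ω_{hjk}| + αγ Σ_{j≠k}‖Ω_{·jk}‖₂` has a unique
minimizer whose mode-1 fibers are given by group-wise shrinkage of soft-thresholding. -/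
theorem stmt_8 (H p : ℕ) (hH : 1 ≤ H) (hp : 1 ≤ p)
    (Γ : Fin H → Fin p → Fin p → ℝ) (α lam γ : ℝ)
    (hα : 0 ≤ α) (hlam : 0 ≤ lam) (hγ : 0 ≤ γ)
    (F : (Fin H → Fin p → Fin p → ℝ) → ℝ)
    (hF : ∀ Ω : Fin H → Fin p → Fin p → ℝ,
      F Ω = (1 / 2) * (∑ h, ∑ j, ∑ k, (Ω h j k - Γ h j k) ^ 2)
          + α * lam * ∑ h, ∑ j, ∑ k ∈ Finset.univ.erase j, |Ω h j k|
          + α * γ * ∑ j, ∑ k ∈ Finset.univ.erase j, Real.sqrt (∑ h, (Ω h j k) ^ 2))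
    (soft : Fin p → Fin p → Fin H → ℝ)
    (hsoft : ∀ j k h, soft j k h = max (|Γ h j k| - α * lam) 0 * Real.sign (Γ h j k)) :
    ∃ Ωstar : Fin H → Fin p → Fin p → ℝ,
      (∀ Ω, F Ωstar ≤ F Ω) ∧
      (∀ Ω, (∀ Ω', F Ω ≤ F Ω') → Ω = Ωstar) ∧
      (∀ h j, Ωstar h j j = Γ h j j) ∧
      (∀ j k, j ≠ k → soft j k ≠ 0 → ∀ h,
        Ωstar h j k
          = max (1 - α * γ / Real.sqrt (∑ i, (soft j k i) ^ 2)) 0 * soft j k h) ∧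
      (∀ j k, j ≠ k → soft j k = 0 → ∀ h, Ωstar h j k = 0) :=
  stmt_8_general H p Γ α lam γ hα hlam hγ F hF soft hsoft
end

section
/- Let p ≥ 3 and let Θ̂ ∈ ℝ^{p×p} be symmetric with zero diagonal, and define ω̂ ∈ ℝ^p componentwise by ω̂_j = (1/(p−1)) Σ_{k≠j} Θ̂_{jk} − (1/(2(p−1)(p−2))) Σ_{k≠j} Σ_{l≠j} Θ̂_{lk}. Then, with r_j = Σ_{k≠j} Θ̂_{jk} and S = Σ_{j=1}^p r_j, the vector ω̂ satisfies the normal equations (p−1)ω̂_j + Σ_{k≠j} ω̂_k = r_j for every j ∈ {1,…,p}; that is, ω̂ is the stationary point of the function ω ↦ Σ_{j≠k}(Θ̂_{jk} − ω_j − ω_k)². -/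
/-!
Symmetry and the zero diagonal give `∑_{k,l ≠ j} Θ̂_{lk} = S - 2 r_j`, so `ω̂_j` is an
explicit combination of `r_j` and `S`, with `∑_k ω̂_k = S / (2(p-1))`; the normal equations
are then a linear identity. The partial derivative of the loss in `ω_j` is
`-4 ∑_{k ≠ j} (Θ̂_{jk} - ω_j - ω_k)` (by symmetry both endpoints of each pair contribute
equally), and this residual sum is `r_j` minus the left side of the `j`-th normal equation.
-/

open Finset

variable {ι : Type*} [Fintype ι] [DecidableEq ι]

theorem Finset.sum_sum_erase_comm {M : Type*} [AddCommMonoid M] (g : ι → ι → M) :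
    ∑ j, ∑ k ∈ univ.erase j, g j k = ∑ j, ∑ k ∈ univ.erase j, g k j := by
  simp_rw [← filter_ne', sum_filter]
  rw [sum_comm]
  refine sum_congr rfl fun j _ => sum_congr rfl fun k _ => ?_
  simp [ne_comm]

section NormalEquations

variable {K : Type*} [Field K]

theorem Matrix.IsSymm.sum_erase_sum_erase {Θ : Matrix ι ι K} (hsym : Θ.IsSymm)
    (hdiag : ∀ j, Θ j j = 0) (j : ι) :
    ∑ k ∈ univ.erase j, ∑ l ∈ univ.erase j, Θ l k
      = ∑ i, ∑ k ∈ univ.erase i, Θ i k - 2 * ∑ k ∈ univ.erase j, Θ j k := by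
  have hrow : ∀ i, ∑ k ∈ univ.erase i, Θ i k = ∑ k, Θ i k := fun i =>
    sum_erase _ (hdiag i)
  have hcol : ∀ k, ∑ l, Θ l k = ∑ l, Θ k l := fun k =>
    sum_congr rfl fun l _ => hsym.apply k l
  simp_rw [sum_erase_eq_sub (mem_univ j), hrow, sum_sub_distrib]
  simp_rw [hcol, hdiag]
  ring

theorem add_sum_erase_eq_of_eq_closedForm (r ω : ι → K)
    (hden : 2 * ((Fintype.card ι : K) - 1) * ((Fintype.card ι : K) - 2) ≠ 0)
    (hω : ∀ j, ω j = 1 / ((Fintype.card ι : K) - 1) * r j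
      - 1 / (2 * ((Fintype.card ι : K) - 1) * ((Fintype.card ι : K) - 2))
        * (∑ i, r i - 2 * r j))
    (j : ι) :
    ((Fintype.card ι : K) - 1) * ω j + ∑ k ∈ univ.erase j, ω k = r j := by
  obtain ⟨⟨htwo, hn1⟩, hn2⟩ := mul_ne_zero_iff.mp hden |>.imp_left mul_ne_zero_iff.mp
  have hsum : ∑ k, ω k = (∑ i, r i) / (2 * ((Fintype.card ι : K) - 1)) := by
    simp_rw [hω, sum_sub_distrib, ← mul_sum, sum_sub_distrib, ← mul_sum, sum_const, card_univ,
      nsmul_eq_mul]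
    field_simp
    ring
  rw [sum_erase_eq_sub (mem_univ j), hsum, hω j]
  field_simp
  ring

theorem sum_erase_sub_sub_eq (Θ : Matrix ι ι K) (ω : ι → K) (j : ι) :
    ∑ k ∈ univ.erase j, (Θ j k - ω j - ω k)
      = ∑ k ∈ univ.erase j, Θ j k
        - (((Fintype.card ι : K) - 1) * ω j + ∑ k ∈ univ.erase j, ω k) := by
  have : Nonempty ι := ⟨j⟩
  rw [sum_sub_distrib, sum_sub_distrib, sum_const, card_erase_of_mem (mem_univ j), card_univ,
    nsmul_eq_mul, Nat.cast_pred Fintype.card_pos]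
  ring

end NormalEquations

section Stationarity

variable {𝕜 : Type*} [NontriviallyNormedField 𝕜]

def offDiagLoss (Θ : Matrix ι ι 𝕜) (ω : ι → 𝕜) : 𝕜 :=
  ∑ j, ∑ k ∈ univ.erase j, (Θ j k - ω j - ω k) ^ 2

theorem hasFDerivAt_offDiagLoss {Θ : Matrix ι ι 𝕜} (hsym : Θ.IsSymm) (ω : ι → 𝕜) :
    HasFDerivAt (offDiagLoss Θ)
      (∑ j, (-4 * ∑ k ∈ univ.erase j, (Θ j k - ω j - ω k)) •
        (ContinuousLinearMap.proj j : (ι → 𝕜) →L[𝕜] 𝕜)) ω := by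
  have hres : ∀ j k, HasFDerivAt (fun ω : ι → 𝕜 => Θ j k - ω j - ω k)
      (-(ContinuousLinearMap.proj j : (ι → 𝕜) →L[𝕜] 𝕜) - ContinuousLinearMap.proj k) ω :=
    fun j k => by
      simpa using ((hasFDerivAt_const (Θ j k) ω).fun_sub
        (hasFDerivAt_apply (𝕜 := 𝕜) j ω)).fun_sub (hasFDerivAt_apply (𝕜 := 𝕜) k ω)
  refine (HasFDerivAt.fun_sum fun j _ => HasFDerivAt.fun_sum fun k _ => (hres j k).pow 2)
    |>.congr_fderiv ?_
  ext v
  set e : ι → ι → 𝕜 := fun j k => Θ j k - ω j - ω k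
  have he : ∀ j k, e k j = e j k := fun j k => by simp only [e, hsym.apply j k]; ring
  have hswap :
      ∑ j, ∑ k ∈ univ.erase j, e j k * v k = ∑ j, ∑ k ∈ univ.erase j, e j k * v j := by
    rw [sum_sum_erase_comm]
    simp_rw [he]
  simp only [_root_.sum_apply, smul_apply, sub_apply, neg_apply, ContinuousLinearMap.proj_apply,
    smul_eq_mul, Nat.add_one_sub_one, pow_one, nsmul_eq_mul, Nat.cast_ofNat]
  calc ∑ j, ∑ k ∈ univ.erase j, 2 * e j k * (-v j - v k)
      = -2 * (∑ j, ∑ k ∈ univ.erase j, e j k * v j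
          + ∑ j, ∑ k ∈ univ.erase j, e j k * v k) := by
        simp only [mul_add, mul_sum, ← sum_add_distrib]
        refine sum_congr rfl fun j _ => sum_congr rfl fun k _ => by ring
    _ = ∑ j, -4 * (∑ k ∈ univ.erase j, e j k) * v j := by
        rw [hswap, ← two_mul, ← mul_assoc, mul_sum]
        refine sum_congr rfl fun j _ => ?_
        rw [← sum_mul]
        ring

end Stationarity

theorem stmt_12_general (p : ℕ) (hp : 3 ≤ p)
    (Θ : Matrix (Fin p) (Fin p) ℝ) (hsym : Θ.IsSymm) (hdiag : ∀ j, Θ j j = 0)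
    (ωhat : Fin p → ℝ)
    (hωhat : ∀ j, ωhat j =
      (1 / ((p : ℝ) - 1)) * ∑ k ∈ Finset.univ.erase j, Θ j k
        - (1 / (2 * ((p : ℝ) - 1) * ((p : ℝ) - 2))) *
            ∑ k ∈ Finset.univ.erase j, ∑ l ∈ Finset.univ.erase j, Θ l k)
    (r : Fin p → ℝ) (hr : ∀ j, r j = ∑ k ∈ Finset.univ.erase j, Θ j k)
    (f : (Fin p → ℝ) → ℝ)
    (hf : ∀ ω : Fin p → ℝ,
      f ω = ∑ j, ∑ k ∈ Finset.univ.erase j, (Θ j k - ω j - ω k) ^ 2) :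
    (∀ j, ((p : ℝ) - 1) * ωhat j + ∑ k ∈ Finset.univ.erase j, ωhat k = r j) ∧
    fderiv ℝ f ωhat = 0 := by
  have hden : 2 * ((p : ℝ) - 1) * ((p : ℝ) - 2) ≠ 0 := by
    have hp' : (3 : ℝ) ≤ p := by exact_mod_cast hp
    exact mul_ne_zero (mul_ne_zero two_ne_zero (by linarith)) (by linarith)
  have hnormal : ∀ j, ((p : ℝ) - 1) * ωhat j + ∑ k ∈ univ.erase j, ωhat k = r j := by
    have hclosed : ∀ j, ωhat j = 1 / ((p : ℝ) - 1) * r j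
        - 1 / (2 * ((p : ℝ) - 1) * ((p : ℝ) - 2)) * (∑ i, r i - 2 * r j) := fun j => by
      simp_rw [hωhat, hsym.sum_erase_sum_erase hdiag, ← hr]
    simpa only [Fintype.card_fin] using
      add_sum_erase_eq_of_eq_closedForm r ωhat (by simpa only [Fintype.card_fin] using hden)
        (by simpa only [Fintype.card_fin] using hclosed)
  refine ⟨hnormal, ?_⟩
  have hresidual : ∀ j, ∑ k ∈ univ.erase j, (Θ j k - ωhat j - ωhat k) = 0 := fun j => by
    rw [sum_erase_sub_sub_eq, Fintype.card_fin, hnormal, hr, sub_self]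
  rw [show f = offDiagLoss Θ from funext hf, (hasFDerivAt_offDiagLoss hsym ωhat).fderiv]
  simp [hresidual]

/-- The closed-form `ω̂` of Proposition 1 satisfies the normal equations
`(p−1)ω̂_j + Σ_{k≠j} ω̂_k = r_j` with `r_j = Σ_{k≠j} Θ̂_{jk}`; that is, `ω̂` is the
stationary point of `ω ↦ Σ_{j≠k}(Θ̂_{jk} − ω_j − ω_k)²`. -/
theorem stmt_12 (p : ℕ) (hp : 3 ≤ p)
    (Θ : Matrix (Fin p) (Fin p) ℝ) (hsym : Θ.IsSymm) (hdiag : ∀ j, Θ j j = 0)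
    (ωhat : Fin p → ℝ)
    (hωhat : ∀ j, ωhat j =
      (1 / ((p : ℝ) - 1)) * ∑ k ∈ Finset.univ.erase j, Θ j k
        - (1 / (2 * ((p : ℝ) - 1) * ((p : ℝ) - 2))) *
            ∑ k ∈ Finset.univ.erase j, ∑ l ∈ Finset.univ.erase j, Θ l k)
    (r : Fin p → ℝ) (hr : ∀ j, r j = ∑ k ∈ Finset.univ.erase j, Θ j k)
    (S : ℝ) (hS : S = ∑ j, r j)
    (f : (Fin p → ℝ) → ℝ)
    (hf : ∀ ω : Fin p → ℝ,
      f ω = ∑ j, ∑ k ∈ Finset.univ.erase j, (Θ j k - ω j - ω k) ^ 2) :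
    (∀ j, ((p : ℝ) - 1) * ωhat j + ∑ k ∈ Finset.univ.erase j, ωhat k = r j) ∧
    fderiv ℝ f ωhat = 0 :=
  stmt_12_general p hp Θ hsym hdiag ωhat hωhat r hr f hf
end
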